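/- (Dual second-order KKT necessary conditions.) Let x̄ be a weak local Pareto minimizer of problem (VP) and let d be a nonzero critical direction at x̄. Suppose Conditions (C) are satisfied, and assume both the second-order Zangwill constraint qualification cl(A(x̄,d)) = B(x̄,d) and the Abadie constraint qualification L(x̄) = T(S,x̄) hold (and that the second-order directional derivatives f_j''(x̄,d), j = 1,…,n, and g_i''(x̄,d), i ∈ I(x̄), exist). Then there exist Lagrange multipliers λ ∈ ℝⁿ, μ ∈ ℝ^m with λ ≥ 0 componentwise, λ ≠ 0, μ ≥ 0 componentwise, such that μ_i g_i(x̄) = 0 for i = 1,…,m, Σ_{j=1}^n λ_j ∇f_j(x̄) + Σ_{i=1}^m μ_i ∇g_i(x̄) = 0, and Σ_{j=1}^n λ_j f_j''(x̄,d) + Σ_{i ∈ I(x̄)} μ_i g_i''(x̄,d) ≥ 0. -/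

import Mathlib

/-!
At a weak local Pareto minimizer no feasible sequence `x̄ + t_k u_k` (`t_k → 0⁺`, `u_k → u`) and
no feasible parabola `t ↦ x̄ + t d + (t²/2) z` decreases all objectives strictly. To first and
second order this excludes `∇f_j(x̄) u < 0` for all `j` when `u ∈ T(S,x̄)`, and
`∇f_j(x̄) z + f_j''(x̄,d) < 0` for all `j` with `∇f_j(x̄) d = 0` when `z ∈ A(x̄,d)`, hence, the
latter condition being open, also when `z ∈ cl A(x̄,d)`. With the Abadie and the Zangwill
qualifications, the homogenized linear system `τ ≥ 0`,
`∇f_j z + τ f_j''(x̄,d) < 0` (`∇f_j(x̄) d = 0`), `∇g_i z + τ g_i''(x̄,d) ≤ 0` (`i ∈ K(x̄,d)`)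
therefore has no solution: for `τ > 0` the point `z / τ` lies in `B(x̄,d)`, and for `τ = 0` the
point `z + C d` is, for large `C`, a first-order descent direction in `L(x̄)`. Motzkin's
transposition theorem, obtained from Farkas' lemma by Fourier–Motzkin elimination, turns this
into the multipliers.
-/

open Set Filter Topology
open scoped Classical

noncomputable section

/-- The second-order directional derivative of `h` at `x` in direction `u` equals `D`. -/
def HasDirDeriv2 {s : ℕ} (h : (Fin s → ℝ) → ℝ) (x u : Fin s → ℝ) (D : ℝ) : Prop :=
  Filter.Tendsto (fun t : ℝ => 2 / t ^ 2 * (h (x + t • u) - h x - t * fderiv ℝ h x u))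
    (𝓝[>] (0 : ℝ)) (𝓝 D)

/-- The set `A(x,d)` for the constraints `g`. -/
def setA {s : ℕ} (m : ℕ) (g : Fin m → (Fin s → ℝ) → ℝ) (x d : Fin s → ℝ) :
    Set (Fin s → ℝ) :=
  {z | ∀ i, g i x = 0 → fderiv ℝ (g i) x d = 0 →
    ∃ δ > 0, ∀ t ∈ Ioo (0 : ℝ) δ, g i (x + t • d + (t ^ 2 / 2) • z) ≤ 0}

/-- The set `B(x,d)` for the constraints `g`, with `gdd i = g_i''(x,d)`. -/
def setB {s : ℕ} (m : ℕ) (g : Fin m → (Fin s → ℝ) → ℝ) (x d : Fin s → ℝ)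
    (gdd : Fin m → ℝ) : Set (Fin s → ℝ) :=
  {z | ∀ i, g i x = 0 → fderiv ℝ (g i) x d = 0 → fderiv ℝ (g i) x z + gdd i ≤ 0}

/-- The Bouligand tangent (contingent) cone to `S` at `x`. -/
def bouligandTangentCone {s : ℕ} (S : Set (Fin s → ℝ)) (x : Fin s → ℝ) :
    Set (Fin s → ℝ) :=
  {u | ∃ (t : ℕ → ℝ) (uk : ℕ → Fin s → ℝ),
    (∀ k, 0 < t k) ∧ Filter.Tendsto t Filter.atTop (𝓝 0) ∧
    Filter.Tendsto uk Filter.atTop (𝓝 u) ∧ ∀ k, x + t k • uk k ∈ S}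


namespace Module.Dual

variable {𝕜 E ι κ : Type*} [Field 𝕜] [LinearOrder 𝕜] [IsStrictOrderedRing 𝕜]
  [AddCommGroup E] [Module 𝕜 E]

theorem farkas [Fintype ι] (s : Finset ι) (φ : ι → Module.Dual 𝕜 E) (ψ : Module.Dual 𝕜 E) :
    (∃ μ : ι → 𝕜, (∀ i, 0 ≤ μ i) ∧ (∀ i ∉ s, μ i = 0) ∧ ∑ i, μ i • φ i = ψ) ∨
      ∃ z, (∀ i ∈ s, φ i z ≤ 0) ∧ 0 < ψ z := by
  induction s using Finset.induction_on generalizing φ ψ with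
  | empty =>
    by_cases hψ : ψ = 0
    · exact .inl ⟨0, fun _ => le_rfl, fun _ _ => rfl, by simp [hψ]⟩
    obtain ⟨z, hz⟩ : ∃ z, ψ z ≠ 0 := by
      by_contra! h
      exact hψ (LinearMap.ext h)
    rcases hz.lt_or_gt with hneg | hpos
    · exact .inr ⟨-z, by simp, by simpa using hneg⟩
    · exact .inr ⟨z, by simp, hpos⟩
  | insert k s hk ih =>
    obtain ⟨μ, hμ0, hμs, hμ⟩ | ⟨z, hz, hψz⟩ := ih φ ψ
    · exact .inl ⟨μ, hμ0, fun i hi => hμs i (fun h => hi (Finset.mem_insert_of_mem h)), hμ⟩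
    by_cases hkz : φ k z ≤ 0
    · exact .inr ⟨z, Finset.forall_mem_insert _ _ _ |>.2 ⟨hkz, hz⟩, hψz⟩
    push Not at hkz
    -- `P` projects functionals onto those vanishing at `z`, along `φ k`.
    let P : Module.Dual 𝕜 E →ₗ[𝕜] Module.Dual 𝕜 E :=
      LinearMap.id - (φ k z)⁻¹ • (Module.Dual.eval 𝕜 E z).smulRight (φ k)
    have hP : ∀ w y, P w y = w (y - (φ k y / φ k z) • z) := by
      intro w y
      simp only [P, LinearMap.sub_apply, LinearMap.id_apply, LinearMap.smul_apply,
        LinearMap.smulRight_apply, eval_apply, map_sub, map_smul, smul_eq_mul]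
      field_simp
    obtain ⟨μ, hμ0, hμs, hμ⟩ | ⟨y, hy, hψy⟩ := ih (P ∘ φ) (P ψ)
    · set w := ∑ i, μ i • φ i
      have hwz : w z ≤ 0 := by
        simp only [w, LinearMap.sum_apply, LinearMap.smul_apply, smul_eq_mul]
        refine Finset.sum_nonpos fun i _ => ?_
        by_cases hi : i ∈ s
        · exact mul_nonpos_of_nonneg_of_nonpos (hμ0 i) (hz i hi)
        · simp [hμs i hi]
      set α := (φ k z)⁻¹ * (ψ z - w z) with hα_def
      have hα : 0 ≤ α := mul_nonneg (inv_nonneg.2 hkz.le) (by linarith)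
      have hψ : ψ = w + α • φ k := by
        have hPw : P (w - ψ) = 0 := by simpa [w, sub_eq_zero] using hμ
        ext y
        have := LinearMap.congr_fun hPw y
        simp only [P, hα_def, LinearMap.sub_apply, LinearMap.id_apply, LinearMap.smul_apply,
          LinearMap.smulRight_apply, LinearMap.add_apply, LinearMap.zero_apply, eval_apply,
          smul_eq_mul] at this ⊢
        linear_combination -this
      have hμα : 0 ≤ μ + Pi.single k α := add_nonneg hμ0 (Pi.single_nonneg.2 hα)
      refine .inl ⟨μ + Pi.single k α, hμα, fun i hi => ?_, ?_⟩
      · rw [Finset.mem_insert, not_or] at hi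
        simp [hμs i hi.2, hi.1]
      · simp [add_smul, Finset.sum_add_distrib, Pi.single_apply, hψ, w]
    · refine .inr ⟨y - (φ k y / φ k z) • z, ?_, by rw [← hP]; exact hψy⟩
      refine Finset.forall_mem_insert _ _ _ |>.2 ⟨?_, fun i hi => ?_⟩
      · simp [hkz.ne']
      · rw [← hP]; exact hy i hi

theorem motzkin [Fintype ι] [Fintype κ] (J : Finset ι) (K : Finset κ)
    (a : ι → Module.Dual 𝕜 E) (c : κ → Module.Dual 𝕜 E)
    (h : ¬ ∃ z, (∀ j ∈ J, a j z < 0) ∧ ∀ i ∈ K, c i z ≤ 0) :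
    ∃ (lam : ι → 𝕜) (mu : κ → 𝕜), (∀ j, 0 ≤ lam j) ∧ (∀ j ∉ J, lam j = 0) ∧
      (∀ i, 0 ≤ mu i) ∧ (∀ i ∉ K, mu i = 0) ∧ ∑ j, lam j = 1 ∧
      ∑ j, lam j • a j + ∑ i, mu i • c i = 0 := by
  -- Farkas in `E × 𝕜`, the extra coordinate being a slack that turns `< 0` into `≤ 0`.
  let φ : ι ⊕ κ → Module.Dual 𝕜 (E × 𝕜) :=
    Sum.elim (fun j => (a j).coprod LinearMap.id) (fun i => (c i).coprod 0)
  obtain ⟨ν, hν0, hνs, hν⟩ | ⟨⟨z, σ⟩, hz, hσ⟩ :=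
    farkas (J.disjSum K) φ (LinearMap.snd 𝕜 E 𝕜)
  · refine ⟨ν ∘ Sum.inl, ν ∘ Sum.inr, fun j => hν0 _, fun j hj => hνs _ (by simpa using hj),
      fun i => hν0 _, fun i hi => hνs _ (by simpa using hi), ?_, ?_⟩
    · simpa [φ, Fintype.sum_sum_type] using LinearMap.congr_fun hν (0, 1)
    · ext z
      simpa [φ, Fintype.sum_sum_type] using LinearMap.congr_fun hν (z, 0)
  · refine (h ⟨z, fun j hj => ?_, fun i hi => ?_⟩).elim
    · have := hz (.inl j) (by simpa using hj)
      simp only [φ, Sum.elim_inl, LinearMap.coprod_apply, LinearMap.id_apply] at this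
      simp only [LinearMap.snd_apply] at hσ
      linarith
    · simpa [φ] using hz (.inr i) (by simpa using hi)

theorem motzkin_homogenized [Fintype ι] [Fintype κ] (J : Finset ι) (K : Finset κ)
    (a : ι → Module.Dual 𝕜 E) (α : ι → 𝕜) (c : κ → Module.Dual 𝕜 E) (γ : κ → 𝕜)
    (h : ¬ ∃ z τ, 0 ≤ τ ∧ (∀ j ∈ J, a j z + τ * α j < 0) ∧ ∀ i ∈ K, c i z + τ * γ i ≤ 0) :
    ∃ (lam : ι → 𝕜) (mu : κ → 𝕜), (∀ j, 0 ≤ lam j) ∧ (∀ j ∉ J, lam j = 0) ∧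
      (∀ i, 0 ≤ mu i) ∧ (∀ i ∉ K, mu i = 0) ∧ ∑ j, lam j = 1 ∧
      ∑ j, lam j • a j + ∑ i, mu i • c i = 0 ∧ 0 ≤ ∑ j, lam j * α j + ∑ i, mu i * γ i := by
  -- Motzkin in `E × 𝕜`, with `-τ ≤ 0` as the extra weak inequality, indexed by `none`.
  let a' : ι → Module.Dual 𝕜 (E × 𝕜) := fun j => (a j).coprod (α j • LinearMap.id)
  let c' : Option κ → Module.Dual 𝕜 (E × 𝕜) :=
    fun i => i.elim (-LinearMap.snd 𝕜 E 𝕜) fun i => (c i).coprod (γ i • LinearMap.id)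
  have h' : ¬ ∃ y, (∀ j ∈ J, a' j y < 0) ∧ ∀ i ∈ Finset.insertNone K, c' i y ≤ 0 := by
    rintro ⟨⟨z, τ⟩, hJ, hK⟩
    refine h ⟨z, τ, by simpa [c'] using hK none (by simp), fun j hj => ?_, fun i hi => ?_⟩
    · simpa [a', mul_comm] using hJ j hj
    · simpa [c', mul_comm] using hK (some i) (by simpa using hi)
  obtain ⟨lam, mu, hlam0, hlamJ, hmu0, hmuK, hlam1, hsum⟩ := motzkin J _ a' c' h'
  refine ⟨lam, mu ∘ some, hlam0, hlamJ, fun i => hmu0 _, fun i hi => hmuK _ (by simpa using hi),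
    hlam1, ?_, ?_⟩
  · ext z
    simpa [a', c', Fintype.sum_option] using LinearMap.congr_fun hsum (z, 0)
  · have h01 := LinearMap.congr_fun hsum (0, 1)
    simp only [a', c', Fintype.sum_option, Option.elim_none, Option.elim_some, LinearMap.add_apply,
      LinearMap.sum_apply, LinearMap.smul_apply, LinearMap.neg_apply, LinearMap.coprod_apply,
      LinearMap.snd_apply, LinearMap.id_apply, LinearMap.zero_apply, map_zero, smul_eq_mul,
      mul_one, zero_add, mul_neg] at h01
    simp only [Function.comp_apply]
    linarith [hmu0 none]

end Module.Dual

section Parabola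

variable {E : Type*} [NormedAddCommGroup E] [NormedSpace ℝ E] {f : E → ℝ} {f' : E →L[ℝ] ℝ}
  {x d v : E}

theorem HasFDerivAt.eventually_lt_of_tendsto_inv_smul {α : Type*} {l : Filter α} {t : α → ℝ}
    {δ : α → E} (hf : HasFDerivAt f f' x) (ht : Tendsto t l (𝓝[>] 0))
    (hδ : Tendsto (fun a => (t a)⁻¹ • δ a) l (𝓝 v)) (hv : f' v < 0) :
    ∀ᶠ a in l, f (x + δ a) < f x := by
  have hpos : ∀ᶠ a in l, 0 < t a := ht self_mem_nhdsWithin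
  have hδ0 : Tendsto δ l (𝓝 0) := by
    have := (tendsto_nhdsWithin_iff.1 ht).1.smul hδ
    rw [zero_smul] at this
    exact this.congr' (hpos.mono fun a ha => by simp [smul_smul, ha.ne'])
  have hlim := hf.hasFDerivWithinAt.lim hδ0 (.of_forall fun _ => mem_univ _) hδ
  filter_upwards [hlim.eventually (gt_mem_nhds hv), hpos] with a hneg ha
  exact sub_neg.1 (neg_of_mul_neg_right hneg (inv_pos.2 ha).le)

theorem tendsto_parabola (x d z : E) :
    Tendsto (fun t : ℝ => x + t • d + (t ^ 2 / 2) • z) (𝓝[>] 0) (𝓝 x) := by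
  have : Continuous fun t : ℝ => x + t • d + (t ^ 2 / 2) • z := by fun_prop
  simpa using (this.tendsto 0).mono_left nhdsWithin_le_nhds

theorem HasFDerivAt.eventually_lt_parabola (hf : HasFDerivAt f f' x) (hd : f' d < 0) (z : E) :
    ∀ᶠ t : ℝ in 𝓝[>] 0, f (x + t • d + (t ^ 2 / 2) • z) < f x := by
  have hδ : Tendsto (fun t : ℝ => t⁻¹ • (t • d + (t ^ 2 / 2) • z)) (𝓝[>] 0) (𝓝 d) := by
    have : Tendsto (fun t : ℝ => d + (t / 2) • z) (𝓝[>] 0) (𝓝 d) := by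
      have : Continuous fun t : ℝ => d + (t / 2) • z := by fun_prop
      simpa using (this.tendsto 0).mono_left nhdsWithin_le_nhds
    refine this.congr' (eventually_mem_nhdsWithin.mono fun t (ht : 0 < t) => ?_)
    show _ = t⁻¹ • _
    rw [smul_add, smul_smul, smul_smul, inv_mul_cancel₀ ht.ne', one_smul]
    congr 2
    field_simp
  simpa only [add_assoc] using hf.eventually_lt_of_tendsto_inv_smul tendsto_id hδ hd

theorem HasStrictFDerivAt.tendsto_parabola {D : ℝ} (hf : HasStrictFDerivAt f f' x)
    (hdd : Tendsto (fun t : ℝ => 2 / t ^ 2 * (f (x + t • d) - f x - t * f' d)) (𝓝[>] 0) (𝓝 D))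
    (z : E) :
    Tendsto (fun t : ℝ => 2 / t ^ 2 * (f (x + t • d + (t ^ 2 / 2) • z) - f x - t * f' d))
      (𝓝[>] 0) (𝓝 (D + f' z)) := by
  have hpair : Tendsto (fun t : ℝ => (x + t • d + (t ^ 2 / 2) • z, x + t • d)) (𝓝[>] 0)
      (𝓝 (x, x)) := by
    have : Continuous fun t : ℝ => (x + t • d + (t ^ 2 / 2) • z, x + t • d) := by fun_prop
    simpa using (this.tendsto 0).mono_left nhdsWithin_le_nhds
  have hO : (fun t : ℝ => (t ^ 2 / 2) • z) =O[𝓝[>] 0] fun t => t ^ 2 / 2 :=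
    .of_bound ‖z‖ (.of_forall fun t => by rw [norm_smul, mul_comm])
  -- strict differentiability: `f` on the parabola minus `f (x + t • d)` is `(t²/2) f' z + o(t²)`
  have hrem := ((hf.isLittleO.comp_tendsto hpair).trans_isBigO
    (by simpa only [Function.comp_def, add_sub_cancel_left] using hO)).tendsto_div_nhds_zero
  have hlim := (hdd.add hrem).add_const (f' z)
  rw [add_zero] at hlim
  refine hlim.congr' (eventually_mem_nhdsWithin.mono fun t (ht : 0 < t) => ?_)
  simp only [Function.comp_apply, add_sub_cancel_left, map_smul, smul_eq_mul]
  field_simp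
  ring

theorem HasStrictFDerivAt.eventually_lt_parabola {z : E} {D : ℝ} (hf : HasStrictFDerivAt f f' x)
    (hdd : Tendsto (fun t : ℝ => 2 / t ^ 2 * (f (x + t • d) - f x - t * f' d)) (𝓝[>] 0) (𝓝 D))
    (hd : f' d = 0) (hz : D + f' z < 0) :
    ∀ᶠ t : ℝ in 𝓝[>] 0, f (x + t • d + (t ^ 2 / 2) • z) < f x := by
  filter_upwards [(hf.tendsto_parabola hdd z).eventually (gt_mem_nhds hz),
    self_mem_nhdsWithin] with t ht (htpos : 0 < t)
  rw [hd, mul_zero, sub_zero] at ht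
  exact sub_neg.1 (neg_of_mul_neg_right ht (by positivity))

end Parabola

theorem eventually_feasible_parabola {s m : ℕ} {g : Fin m → (Fin s → ℝ) → ℝ} {x d z : Fin s → ℝ}
    (hz : z ∈ setA m g x d) (hfeas : ∀ i, g i x ≤ 0) (hcont : ∀ i, g i x ≠ 0 → ContinuousAt (g i) x)
    (hg : ∀ i, g i x = 0 → DifferentiableAt ℝ (g i) x)
    (hcrit : ∀ i, g i x = 0 → fderiv ℝ (g i) x d ≤ 0) :
    ∀ᶠ t : ℝ in 𝓝[>] 0, ∀ i, g i (x + t • d + (t ^ 2 / 2) • z) ≤ 0 := by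
  refine eventually_all.2 fun i => ?_
  by_cases hi : g i x = 0
  · rcases (hcrit i hi).eq_or_lt with hid | hid
    · obtain ⟨δ, hδ, hδt⟩ := hz i hi hid
      filter_upwards [Ioo_mem_nhdsGT hδ] with t ht using hδt t ht
    · filter_upwards [(hg i hi).hasFDerivAt.eventually_lt_parabola hid z] with t ht
      exact (hi ▸ ht).le
  · filter_upwards [((hcont i hi).tendsto.comp (tendsto_parabola x d z)).eventually
      (gt_mem_nhds ((hfeas i).lt_of_ne hi))] with t ht using ht.le

def IsWeakLocalParetoMinOn {ι E : Type*} [TopologicalSpace E] (f : ι → E → ℝ) (S : Set E)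
    (x : E) : Prop :=
  ∀ᶠ y in 𝓝 x, y ∈ S → ¬ ∀ j, f j y < f j x

namespace IsWeakLocalParetoMinOn

theorem not_eventually_lt {ι E α : Type*} [TopologicalSpace E] {f : ι → E → ℝ} {S : Set E} {x : E}
    {l : Filter α} [l.NeBot] {γ : α → E} (h : IsWeakLocalParetoMinOn f S x)
    (hγ : Tendsto γ l (𝓝 x)) (hS : ∀ᶠ a in l, γ a ∈ S) :
    ¬ ∀ᶠ a in l, ∀ j, f j (γ a) < f j x := fun hlt =>
  let ⟨_, hmin, hS, hlt⟩ := ((hγ.eventually h).and (hS.and hlt)).exists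
  hmin hS hlt

variable {ι : Type*} [Finite ι] {s m : ℕ} {f : ι → (Fin s → ℝ) → ℝ} {x d : Fin s → ℝ}

theorem not_forall_fderiv_neg {S : Set (Fin s → ℝ)} {u : Fin s → ℝ}
    (h : IsWeakLocalParetoMinOn f S x) (hf : ∀ j, DifferentiableAt ℝ (f j) x)
    (hu : u ∈ bouligandTangentCone S x) : ¬ ∀ j, fderiv ℝ (f j) x u < 0 := by
  obtain ⟨t, uk, htpos, ht0, huk, hS⟩ := hu
  intro hneg
  have ht : Tendsto t atTop (𝓝[>] 0) := tendsto_nhdsWithin_iff.2 ⟨ht0, .of_forall htpos⟩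
  have hδ : Tendsto (fun k => (t k)⁻¹ • (t k • uk k)) atTop (𝓝 u) :=
    huk.congr fun k => by simp [smul_smul, (htpos k).ne']
  refine h.not_eventually_lt (γ := fun k => x + t k • uk k) ?_ (.of_forall hS)
    (eventually_all.2 fun j => (hf j).hasFDerivAt.eventually_lt_of_tendsto_inv_smul ht hδ (hneg j))
  simpa using tendsto_const_nhds.add (ht0.smul huk)

theorem disjoint_closure_setA {X : Set (Fin s → ℝ)} {g : Fin m → (Fin s → ℝ) → ℝ} {fdd : ι → ℝ}
    (h : IsWeakLocalParetoMinOn f {y | y ∈ X ∧ ∀ i, g i y ≤ 0} x) (hX : X ∈ 𝓝 x)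
    (hfeas : ∀ i, g i x ≤ 0) (hcont : ∀ i, g i x ≠ 0 → ContinuousAt (g i) x)
    (hg : ∀ i, g i x = 0 → DifferentiableAt ℝ (g i) x)
    (hcritg : ∀ i, g i x = 0 → fderiv ℝ (g i) x d ≤ 0)
    (hf : ∀ j, HasStrictFDerivAt (f j) (fderiv ℝ (f j) x) x)
    (hcritf : ∀ j, fderiv ℝ (f j) x d ≤ 0) (hfdd : ∀ j, HasDirDeriv2 (f j) x d (fdd j)) :
    Disjoint (closure (setA m g x d))
      {z | ∀ j, fderiv ℝ (f j) x d = 0 → fderiv ℝ (f j) x z + fdd j < 0} := by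
  refine .closure_left (Set.disjoint_left.2 fun z hzA hzD => ?_) ?_
  · refine h.not_eventually_lt (tendsto_parabola x d z) ?_ (eventually_all.2 fun j => ?_)
    · filter_upwards [tendsto_parabola x d z hX, eventually_feasible_parabola hzA hfeas hcont hg
        hcritg] with t hX hg using ⟨hX, hg⟩
    rcases (hcritf j).eq_or_lt with hj | hj
    · exact (hf j).eventually_lt_parabola (hfdd j) hj (by linarith [hzD j hj])
    · exact (hf j).hasFDerivAt.eventually_lt_parabola hj z
  · simp only [Set.ofPred_forall]
    exact isOpen_iInter_of_finite fun j => isOpen_iInter_of_finite fun _ =>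
      isOpen_lt (by fun_prop) continuous_const

end IsWeakLocalParetoMinOn

theorem eventually_add_mul_neg {a b : ℝ} (hb : b < 0) : ∀ᶠ C : ℝ in atTop, a + C * b < 0 := by
  filter_upwards [eventually_gt_atTop (a / -b)] with C hC
  rw [div_lt_iff₀ (neg_pos.2 hb)] at hC
  linarith

theorem not_exists_homogenized_descent {ι : Type*} [Fintype ι] {s m : ℕ}
    {f : ι → (Fin s → ℝ) → ℝ} {g : Fin m → (Fin s → ℝ) → ℝ} {x d : Fin s → ℝ} {fdd : ι → ℝ}
    {gdd : Fin m → ℝ}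
    (hfirst : ∀ u, (∀ i, g i x = 0 → fderiv ℝ (g i) x u ≤ 0) → ¬ ∀ j, fderiv ℝ (f j) x u < 0)
    (hsecond : Disjoint (setB m g x d gdd)
      {z | ∀ j, fderiv ℝ (f j) x d = 0 → fderiv ℝ (f j) x z + fdd j < 0})
    (hcritf : ∀ j, fderiv ℝ (f j) x d ≤ 0) (hcritg : ∀ i, g i x = 0 → fderiv ℝ (g i) x d ≤ 0) :
    ¬ ∃ z τ, 0 ≤ τ ∧
      (∀ j ∈ ({j | fderiv ℝ (f j) x d = 0} : Finset ι), fderiv ℝ (f j) x z + τ * fdd j < 0) ∧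
      ∀ i ∈ ({i | g i x = 0 ∧ fderiv ℝ (g i) x d = 0} : Finset (Fin m)),
        fderiv ℝ (g i) x z + τ * gdd i ≤ 0 := by
  rintro ⟨z, τ, hτ, hJ, hK⟩
  simp only [Finset.mem_filter_univ] at hJ hK
  rcases hτ.eq_or_lt with rfl | hτ
  · simp only [zero_mul, add_zero] at hJ hK
    have hfC : ∀ᶠ C : ℝ in atTop, ∀ j, fderiv ℝ (f j) x (z + C • d) < 0 := by
      refine eventually_all.2 fun j => ?_
      simp only [map_add, map_smul, smul_eq_mul]
      rcases (hcritf j).eq_or_lt with hj | hj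
      · exact .of_forall fun C => by simpa [hj] using hJ j hj
      · exact eventually_add_mul_neg hj
    have hgC : ∀ᶠ C : ℝ in atTop, ∀ i, g i x = 0 → fderiv ℝ (g i) x (z + C • d) ≤ 0 := by
      refine eventually_all.2 fun i => ?_
      simp only [map_add, map_smul, smul_eq_mul]
      by_cases hi : g i x = 0
      · rcases (hcritg i hi).eq_or_lt with hid | hid
        · exact .of_forall fun C _ => by simpa [hid] using hK i ⟨hi, hid⟩
        · exact (eventually_add_mul_neg hid).mono fun C hC _ => hC.le
      · exact .of_forall fun C hi' => absurd hi' hi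
    obtain ⟨C, hfC, hgC⟩ := (hfC.and hgC).exists
    exact hfirst _ hgC hfC
  · have hscale : ∀ (φ : (Fin s → ℝ) →L[ℝ] ℝ) (c : ℝ),
        φ (τ⁻¹ • z) + c = τ⁻¹ * (φ z + τ * c) := by
      intro φ c
      rw [map_smul, smul_eq_mul]
      field_simp
    have hB : τ⁻¹ • z ∈ setB m g x d gdd := fun i hi hid =>
      (hscale _ _).trans_le (mul_nonpos_of_nonneg_of_nonpos (inv_nonneg.2 hτ.le) (hK i ⟨hi, hid⟩))
    exact Set.disjoint_left.1 hsecond hB fun j hj =>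
      (hscale _ _).trans_lt (mul_neg_of_pos_of_neg (inv_pos.2 hτ) (hJ j hj))

theorem statement9_general {s n m : ℕ} (X : Set (Fin s → ℝ)) (hX : IsOpen X)
    (f : Fin n → (Fin s → ℝ) → ℝ) (g : Fin m → (Fin s → ℝ) → ℝ)
    (xbar d : Fin s → ℝ) (hxX : xbar ∈ X) (hfeas : ∀ i, g i xbar ≤ 0)
    -- weak local Pareto minimizer
    (hmin : ∃ U ∈ 𝓝 xbar, ∀ y ∈ U, y ∈ X → (∀ i, g i y ≤ 0) → ¬ ∀ j, f j y < f j xbar)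
    (hcritf : ∀ j, fderiv ℝ (f j) xbar d ≤ 0)
    (hcritg : ∀ i, g i xbar = 0 → fderiv ℝ (g i) xbar d ≤ 0)
    -- Conditions (C)
    (hCont : ∀ i, g i xbar ≠ 0 → ContinuousAt (g i) xbar)
    (hfC1 : ∀ j, ContDiffOn ℝ 1 (f j) X)
    (hgC1 : ∀ i, g i xbar = 0 → ContDiffOn ℝ 1 (g i) X)
    -- existence of the second-order directional derivatives
    (fdd : Fin n → ℝ) (gdd : Fin m → ℝ)
    (hfdd : ∀ j, HasDirDeriv2 (f j) xbar d (fdd j))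
    -- second-order Zangwill constraint qualification
    (hCQ : closure (setA m g xbar d) = setB m g xbar d gdd)
    -- Abadie constraint qualification
    (hAbadie : {u : Fin s → ℝ | ∀ i, g i xbar = 0 → fderiv ℝ (g i) xbar u ≤ 0} =
      bouligandTangentCone {y | y ∈ X ∧ ∀ i, g i y ≤ 0} xbar) :
    ∃ (lam : Fin n → ℝ) (mu : Fin m → ℝ),
      (∀ j, 0 ≤ lam j) ∧ lam ≠ 0 ∧ (∀ i, 0 ≤ mu i) ∧
      (∀ i, mu i * g i xbar = 0) ∧
      ((∑ j, lam j • fderiv ℝ (f j) xbar) + ∑ i, mu i • fderiv ℝ (g i) xbar = 0) ∧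
      0 ≤ (∑ j, lam j * fdd j) + ∑ i, (if g i xbar = 0 then mu i * gdd i else 0) := by
  obtain ⟨U, hU, hminU⟩ := hmin
  have hpareto : IsWeakLocalParetoMinOn f {y | y ∈ X ∧ ∀ i, g i y ≤ 0} xbar :=
    mem_of_superset hU fun y hy hyS => hminU y hy hyS.1 hyS.2
  have hf : ∀ j, HasStrictFDerivAt (f j) (fderiv ℝ (f j) xbar) xbar := fun j =>
    ((hfC1 j).contDiffAt (hX.mem_nhds hxX)).hasStrictFDerivAt one_ne_zero
  have hg : ∀ i, g i xbar = 0 → DifferentiableAt ℝ (g i) xbar := fun i hi =>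
    ((hgC1 i hi).contDiffAt (hX.mem_nhds hxX)).differentiableAt one_ne_zero
  have hfirst := fun u (hu : ∀ i, g i xbar = 0 → fderiv ℝ (g i) xbar u ≤ 0) =>
    hpareto.not_forall_fderiv_neg (fun j => (hf j).differentiableAt) (hAbadie.subset hu)
  have hsecond := hCQ ▸ hpareto.disjoint_closure_setA (hX.mem_nhds hxX) hfeas hCont hg hcritg hf
    hcritf hfdd
  obtain ⟨lam, mu, hlam0, -, hmu0, hmuK, hlam1, hsum, hdd⟩ :=
    Module.Dual.motzkin_homogenized _ _ (fun j => (fderiv ℝ (f j) xbar : Module.Dual ℝ (Fin s → ℝ)))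
      fdd (fun i => (fderiv ℝ (g i) xbar : Module.Dual ℝ (Fin s → ℝ))) gdd
      (not_exists_homogenized_descent hfirst hsecond hcritf hcritg)
  have hmuI : ∀ i, g i xbar ≠ 0 → mu i = 0 := fun i hi => hmuK i (by simp [hi])
  refine ⟨lam, mu, hlam0, fun h => by simp [h] at hlam1, hmu0, fun i => ?_,
    ContinuousLinearMap.coe_injective (by simpa using hsum), hdd.trans_eq ?_⟩
  · by_cases hi : g i xbar = 0 <;> simp [hi, hmuI]
  · congr 1
    refine Finset.sum_congr rfl fun i _ => ?_
    split_ifs with hi <;> simp [hi, hmuI]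

/-- dual second-order KKT necessary conditions: if `x̄` is a weak local Pareto
minimizer of (VP), `d` a nonzero critical direction, Conditions (C) hold, the second-order
Zangwill CQ `cl(A(x̄,d)) = B(x̄,d)` and the Abadie CQ `L(x̄) = T(S,x̄)` hold, and the second-order
directional derivatives exist, then there exist multipliers `λ ≥ 0`, `λ ≠ 0`, `μ ≥ 0` with
`μ_i g_i(x̄) = 0`, `Σ λ_j ∇f_j(x̄) + Σ μ_i ∇g_i(x̄) = 0`, and
`Σ λ_j f_j''(x̄,d) + Σ_{i∈I(x̄)} μ_i g_i''(x̄,d) ≥ 0`. -/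
theorem statement9 {s n m : ℕ} (X : Set (Fin s → ℝ)) (hX : IsOpen X)
    (f : Fin n → (Fin s → ℝ) → ℝ) (g : Fin m → (Fin s → ℝ) → ℝ)
    (xbar d : Fin s → ℝ) (hxX : xbar ∈ X) (hfeas : ∀ i, g i xbar ≤ 0)
    -- weak local Pareto minimizer
    (hmin : ∃ U ∈ 𝓝 xbar, ∀ y ∈ U, y ∈ X → (∀ i, g i y ≤ 0) → ¬ ∀ j, f j y < f j xbar)
    -- d is a nonzero critical direction
    (hd : d ≠ 0)
    (hcritf : ∀ j, fderiv ℝ (f j) xbar d ≤ 0)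
    (hcritg : ∀ i, g i xbar = 0 → fderiv ℝ (g i) xbar d ≤ 0)
    -- Conditions (C)
    (hCont : ∀ i, g i xbar ≠ 0 → ContinuousAt (g i) xbar)
    (hfC1 : ∀ j, ContDiffOn ℝ 1 (f j) X)
    (hgC1 : ∀ i, g i xbar = 0 → ContDiffOn ℝ 1 (g i) X)
    -- existence of the second-order directional derivatives
    (fdd : Fin n → ℝ) (gdd : Fin m → ℝ)
    (hfdd : ∀ j, HasDirDeriv2 (f j) xbar d (fdd j))
    (hgdd : ∀ i, g i xbar = 0 → HasDirDeriv2 (g i) xbar d (gdd i))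
    -- second-order Zangwill constraint qualification
    (hCQ : closure (setA m g xbar d) = setB m g xbar d gdd)
    -- Abadie constraint qualification
    (hAbadie : {u : Fin s → ℝ | ∀ i, g i xbar = 0 → fderiv ℝ (g i) xbar u ≤ 0} =
      bouligandTangentCone {y | y ∈ X ∧ ∀ i, g i y ≤ 0} xbar) :
    ∃ (lam : Fin n → ℝ) (mu : Fin m → ℝ),
      (∀ j, 0 ≤ lam j) ∧ lam ≠ 0 ∧ (∀ i, 0 ≤ mu i) ∧
      (∀ i, mu i * g i xbar = 0) ∧
      ((∑ j, lam j • fderiv ℝ (f j) xbar) + ∑ i, mu i • fderiv ℝ (g i) xbar = 0) ∧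
      0 ≤ (∑ j, lam j * fdd j) + ∑ i, (if g i xbar = 0 then mu i * gdd i else 0) :=
  statement9_general X hX f g xbar d hxX hfeas hmin hcritf hcritg hCont hfC1 hgC1 fdd gdd hfdd hCQ
    hAbadie
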